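/- Let n ≥ 4 and let z(n, n-1) denote the maximum cardinality of a finite set of points in the plane, in general position with pairwise distinct x-coordinates, containing no n-cup, no (n-1)-cap, and no n points in convex position. If S is a finite set of points in the plane in general position containing no n points in convex position, then |S| ≤ z(n, n-1) + 1. -/

import Mathlib

/-!
Common definitions: points in the plane, general position, distinct x-coordinates,
cups, caps, convex position, and the combinatorial functions from the paper.
-/

open Finset

/-- A point in the Euclidean plane, with `p.1` its x-coordinate and `p.2` its y-coordinate. -/
abbrev Pt : Type := ℝ × ℝ

/-- A set of points is in general position if no three (distinct) of its points are collinear. -/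
def GenPos (S : Set Pt) : Prop :=
  ∀ p ∈ S, ∀ q ∈ S, ∀ r ∈ S, p ≠ q → p ≠ r → q ≠ r → ¬ Collinear ℝ ({p, q, r} : Set Pt)

/-- A set of points has pairwise distinct x-coordinates. -/
def DistinctX (S : Set Pt) : Prop :=
  ∀ p ∈ S, ∀ q ∈ S, p ≠ q → p.1 ≠ q.1

/-- The slope of the segment from `p` to `q`. -/
noncomputable def PtSlope (p q : Pt) : ℝ := (q.2 - p.2) / (q.1 - p.1)

/-- `f 0, f 1, …, f (k-1)` is a `k`-cup in `P`: the points lie in `P`, are listed in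
increasing order of x-coordinate, and the slopes of consecutive segments strictly increase. -/
def IsCupSeq (k : ℕ) (P : Set Pt) (f : ℕ → Pt) : Prop :=
  (∀ i, i < k → f i ∈ P) ∧
  (∀ i j, i < j → j < k → (f i).1 < (f j).1) ∧
  (∀ i, i + 2 < k → PtSlope (f i) (f (i + 1)) < PtSlope (f (i + 1)) (f (i + 2)))

/-- `f 0, f 1, …, f (k-1)` is a `k`-cap in `P`: the points lie in `P`, are listed in
increasing order of x-coordinate, and the slopes of consecutive segments strictly decrease. -/
def IsCapSeq (k : ℕ) (P : Set Pt) (f : ℕ → Pt) : Prop :=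
  (∀ i, i < k → f i ∈ P) ∧
  (∀ i j, i < j → j < k → (f i).1 < (f j).1) ∧
  (∀ i, i + 2 < k → PtSlope (f i) (f (i + 1)) > PtSlope (f (i + 1)) (f (i + 2)))

/-- `P` contains a `k`-cup. -/
def HasCup (k : ℕ) (P : Set Pt) : Prop := ∃ f : ℕ → Pt, IsCupSeq k P f

/-- `P` contains a `k`-cap. -/
def HasCap (k : ℕ) (P : Set Pt) : Prop := ∃ f : ℕ → Pt, IsCapSeq k P f

/-- `S` is `(n, m)`-free: it contains no `n`-cup and no `m`-cap. -/
def IsFree (n m : ℕ) (S : Set Pt) : Prop := ¬ HasCup n S ∧ ¬ HasCap m S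

/-- A set of points is in convex position: every point of the set is a vertex (extreme point)
of its convex hull, i.e. no point lies in the convex hull of the others. -/
def ConvexPos (S : Set Pt) : Prop := ∀ p ∈ S, p ∉ convexHull ℝ (S \ {p})

/-- `S` contains `n` points in convex position. -/
def HasConvexNGon (n : ℕ) (S : Set Pt) : Prop :=
  ∃ T : Finset Pt, ↑T ⊆ S ∧ T.card = n ∧ ConvexPos ↑T

/-- The set of cardinalities of finite planar point sets, in general position with pairwise
distinct x-coordinates, containing no `n`-cup and no `m`-cap.  The Erdős–Szekeres cup–cap
number `f(n, m)` is the greatest element of this set. -/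
def CupCapCards (n m : ℕ) : Set ℕ :=
  {N : ℕ | ∃ S : Finset Pt, S.card = N ∧ GenPos ↑S ∧ DistinctX ↑S ∧
    ¬ HasCup n ↑S ∧ ¬ HasCap m ↑S}

/-- The defining property of the Erdős–Szekeres number `f(n) = N`: `N` is the smallest
positive integer such that every set of `N` points in general position in the plane
contains `n` points in convex position. -/
def IsESNumber (n N : ℕ) : Prop :=
  IsLeast {N : ℕ | 0 < N ∧
    ∀ S : Finset Pt, GenPos ↑S → S.card = N → HasConvexNGon n ↑S} N

/-- The point `r` lies strictly below the (non-vertical) line through `p` and `q`. -/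
noncomputable def StrictlyBelow (p q r : Pt) : Prop :=
  r.2 < p.2 + PtSlope p q * (r.1 - p.1)

/-- The point `s ∈ S` is `(m, l)`-good: for every `n ≥ 4` and every finite set `B` of at most
`n - 2` points such that `S ∪ B` is in general position with pairwise distinct x-coordinates
and contains an `(n-1)`-cup with leftmost point `s` and rightmost point in `B`, the set
`S ∪ B` contains an `l`-cap whose two rightmost points lie in `S`, or an `m`-cup whose two
leftmost points lie in `S`, or `n` points in convex position. -/
def IsGoodPoint (m l : ℕ) (S : Finset Pt) (s : Pt) : Prop :=
  ∀ n : ℕ, 4 ≤ n → ∀ B : Finset Pt, B.card ≤ n - 2 →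
    GenPos ↑(S ∪ B) → DistinctX ↑(S ∪ B) →
    (∃ f : ℕ → Pt, IsCupSeq (n - 1) ↑(S ∪ B) f ∧ f 0 = s ∧ f (n - 2) ∈ B) →
    ((∃ f : ℕ → Pt, IsCapSeq l ↑(S ∪ B) f ∧ f (l - 2) ∈ S ∧ f (l - 1) ∈ S) ∨
     (∃ f : ℕ → Pt, IsCupSeq m ↑(S ∪ B) f ∧ f 0 ∈ S ∧ f 1 ∈ S) ∨
     HasConvexNGon n ↑(S ∪ B))

/-- The weight functions `wᵢ(m, k)` from the paper. -/
def w (i m k : ℕ) : ℕ :=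
  if i = 4 then
    Nat.choose (m + k - 6) (k - 2) + Nat.choose (m + k - 7) (k - 3) +
      2 * Nat.choose (m + k - 8) (k - 4)
  else if k < i then 0
  else (i - 1) * Nat.choose (m + k - i - 4) (k - i)

/-- `g(m, l) = Σ_{i=4}^{∞} wᵢ(m, l) = Σ_{i=4}^{l} wᵢ(m, l)` (the sum is finite since
`wᵢ(m, l) = 0` for `i > l`). -/
def g (m l : ℕ) : ℕ := ∑ i ∈ Finset.Icc 4 l, w i m l

/-!
Shear and translate so that one point of `S` is the origin and the others lie in the half-plane
`x > 0`. The projective map `(x, y) ↦ (y / x, -1 / x)` sends the lines through the origin to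
vertical lines and the origin to the point at infinity below; on `x > 0` it preserves general
position and convex position. The images of the other `|S| - 1` points thus have distinct
x-coordinates and contain no convex `n`-gon, hence no `n`-cup; and an `(n - 1)`-cap among them,
completed by the point at infinity below, would pull back to `n` points in convex position
together with the origin. So `|S| - 1 ≤ z`.
-/

open Set

noncomputable section

/-- Twice the signed area of the triangle `a b c`: positive iff `a, b, c` turn counterclockwise. -/
def orient (a b c : Pt) : ℝ := (b.1 - a.1) * (c.2 - a.2) - (b.2 - a.2) * (c.1 - a.1)

lemma orient_rotate (a b c : Pt) : orient a b c = orient b c a := by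
  unfold orient; ring

lemma orient_swap (a b c : Pt) : orient a b c = -orient b a c := by
  unfold orient; ring

lemma orient_swap_right (a b c : Pt) : orient a b c = -orient a c b := by
  unfold orient; ring

@[simp] lemma orient_self_left (a c : Pt) : orient a a c = 0 := by
  unfold orient; ring

@[simp] lemma orient_self_right (a b : Pt) : orient a b b = 0 := by
  unfold orient; ring

@[simp] lemma orient_self_outer (a b : Pt) : orient a b a = 0 := by
  unfold orient; ring

lemma collinear_iff_orient_eq_zero (a b c : Pt) :
    Collinear ℝ ({a, b, c} : Set Pt) ↔ orient a b c = 0 := by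
  rw [collinear_iff_of_mem (mem_insert a {b, c})]
  constructor
  · rintro ⟨v, hv⟩
    obtain ⟨rb, rfl⟩ := hv b (by simp)
    obtain ⟨rc, rfl⟩ := hv c (by simp)
    simp only [orient, vadd_eq_add, Prod.fst_add, Prod.snd_add, Prod.smul_fst, Prod.smul_snd,
      smul_eq_mul]
    ring
  · intro h
    by_cases hab : b = a
    · subst hab
      refine ⟨c - b, fun p hp => ?_⟩
      rcases hp with rfl | rfl | rfl
      · exact ⟨0, by simp⟩
      · exact ⟨0, by simp⟩
      · exact ⟨1, by simp⟩
    have hD : (b.1 - a.1) ^ 2 + (b.2 - a.2) ^ 2 ≠ 0 := by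
      intro hD
      exact hab (Prod.ext (by nlinarith [sq_nonneg (b.1 - a.1), sq_nonneg (b.2 - a.2)])
        (by nlinarith [sq_nonneg (b.1 - a.1), sq_nonneg (b.2 - a.2)]))
    -- `p - a` is parallel to `b - a`, hence equal to its orthogonal projection onto `b - a`
    refine ⟨b - a, fun p hp => ?_⟩
    rcases hp with rfl | rfl | rfl
    · exact ⟨0, by simp⟩
    · exact ⟨1, by simp⟩
    refine ⟨((p.1 - a.1) * (b.1 - a.1) + (p.2 - a.2) * (b.2 - a.2)) /
      ((b.1 - a.1) ^ 2 + (b.2 - a.2) ^ 2), Prod.ext ?_ ?_⟩ <;>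
      simp only [vadd_eq_add, Prod.fst_add, Prod.snd_add, Prod.smul_fst, Prod.smul_snd,
        smul_eq_mul, Prod.fst_sub, Prod.snd_sub] <;> field_simp <;> unfold orient at h
    · linear_combination -(b.2 - a.2) * h
    · linear_combination (b.1 - a.1) * h

lemma orient_pos_iff_slope_lt {p q r : Pt} (h₁ : p.1 < q.1) (h₂ : q.1 < r.1) :
    0 < orient p q r ↔ PtSlope p q < PtSlope q r := by
  unfold PtSlope orient
  rw [div_lt_div_iff₀ (by linarith) (by linarith)]
  constructor <;> intro h <;> linarith

lemma orient_pos_iff_slope_lt_left {p q r : Pt} (h₁ : p.1 < q.1) (h₂ : q.1 < r.1) :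
    0 < orient p q r ↔ PtSlope p q < PtSlope p r := by
  unfold PtSlope orient
  rw [div_lt_div_iff₀ (by linarith) (by linarith)]
  constructor <;> intro h <;> linarith

lemma orient_pos_iff_slope_lt_right {p q r : Pt} (h₁ : p.1 < q.1) (h₂ : q.1 < r.1) :
    0 < orient p q r ↔ PtSlope p r < PtSlope q r := by
  unfold PtSlope orient
  rw [div_lt_div_iff₀ (by linarith) (by linarith)]
  constructor <;> intro h <;> linarith

lemma genPos_iff_orient_ne_zero {S : Set Pt} :
    GenPos S ↔ ∀ a ∈ S, ∀ b ∈ S, ∀ c ∈ S, a ≠ b → a ≠ c → b ≠ c → orient a b c ≠ 0 := by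
  simp only [GenPos, collinear_iff_orient_eq_zero]

lemma GenPos.mono {S T : Set Pt} (h : GenPos S) (hTS : T ⊆ S) : GenPos T :=
  fun a ha b hb c hc => h a (hTS ha) b (hTS hb) c (hTS hc)

lemma GenPos.image {S : Set Pt} (h : GenPos S) {f : Pt → Pt}
    (hf : ∀ a ∈ S, ∀ b ∈ S, ∀ c ∈ S, orient a b c ≠ 0 → orient (f a) (f b) (f c) ≠ 0) :
    GenPos (f '' S) := by
  rw [genPos_iff_orient_ne_zero] at h ⊢
  rintro _ ⟨a, ha, rfl⟩ _ ⟨b, hb, rfl⟩ _ ⟨c, hc, rfl⟩ hab hac hbc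
  exact hf a ha b hb c hc (h a ha b hb c hc (ne_of_apply_ne f hab) (ne_of_apply_ne f hac)
    (ne_of_apply_ne f hbc))

lemma IsCupSeq.orient_pos {k : ℕ} {P : Set Pt} {f : ℕ → Pt} (hf : IsCupSeq k P f)
    {a b c : ℕ} (hab : a < b) (hbc : b < c) (hck : c < k) : 0 < orient (f a) (f b) (f c) := by
  obtain ⟨-, hx, hs⟩ := hf
  have next : ∀ j, j + 1 < k → ∀ i < j, 0 < orient (f i) (f j) (f (j + 1)) := by
    intro j
    induction j with
    | zero => intro _ i hi; omega
    | succ m ih =>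
      intro hm i hi
      rw [orient_pos_iff_slope_lt (hx _ _ hi (by omega)) (hx _ _ (by omega) hm)]
      refine lt_of_le_of_lt ?_ (hs m hm)
      rcases (Nat.lt_succ_iff.1 hi).lt_or_eq with hi | rfl
      · exact ((orient_pos_iff_slope_lt_right (hx i m hi (by omega)) (hx m (m + 1) (by omega)
          (by omega))).1
          (ih (by omega) i hi)).le
      · exact le_rfl
  suffices ∀ c, b < c → c < k → PtSlope (f a) (f b) < PtSlope (f a) (f c) from
    (orient_pos_iff_slope_lt_left (hx a b hab (by omega)) (hx b c hbc hck)).2 (this c hbc hck)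
  intro c hbc
  induction c, hbc using Nat.le_induction with
  | base =>
    intro hk
    exact (orient_pos_iff_slope_lt_left (hx a b hab (by omega)) (hx b _ (by omega) hk)).1
      (next b hk a hab)
  | succ c hbc ih =>
    intro hk
    exact (ih (by omega)).trans ((orient_pos_iff_slope_lt_left (hx a c (by omega) (by omega))
      (hx c _ (by omega) hk)).1 (next c hk a (by omega)))

lemma IsCapSeq.orient_neg {k : ℕ} {P : Set Pt} {f : ℕ → Pt} (hf : IsCapSeq k P f)
    {a b c : ℕ} (hab : a < b) (hbc : b < c) (hck : c < k) : orient (f a) (f b) (f c) < 0 := by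
  let reflect : Pt → Pt := fun p => (p.1, -p.2)
  have hslope : ∀ p q, PtSlope (reflect p) (reflect q) = -PtSlope p q := by
    intro p q; unfold PtSlope; ring
  have hcup : IsCupSeq k univ (reflect ∘ f) :=
    ⟨fun _ _ => trivial, hf.2.1, fun i hi => by
      simpa only [Function.comp, hslope, neg_lt_neg_iff] using hf.2.2 i hi⟩
  have := hcup.orient_pos hab hbc hck
  simp only [orient, Function.comp, reflect] at this ⊢
  linarith

lemma notMem_convexHull_of_orient_neg {a c p : Pt} {s : Set Pt}
    (hs : ∀ r ∈ s, 0 ≤ orient a c r) (hp : orient a c p < 0) : p ∉ convexHull ℝ s := by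
  have hconv : Convex ℝ {r : Pt | 0 ≤ orient a c r} := by
    intro x hx y hy μ ν hμ hν hμν
    have : orient a c (μ • x + ν • y) = μ * orient a c x + ν * orient a c y := by
      simp only [orient, Prod.fst_add, Prod.snd_add, Prod.smul_fst, Prod.smul_snd, smul_eq_mul]
      linear_combination ((c.1 - a.1) * a.2 - (c.2 - a.2) * a.1) * hμν
    change 0 ≤ orient a c (μ • x + ν • y)
    rw [this]
    exact add_nonneg (mul_nonneg hμ hx) (mul_nonneg hν hy)
  exact fun h => hp.not_ge (convexHull_min hs hconv h)

section OrientedSequence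

variable {k : ℕ} {f : ℕ → Pt}
  (hf : ∀ a b c, a < b → b < c → c < k → 0 < orient (f a) (f b) (f c))
include hf

lemma orient_neg_of_between {a c j : ℕ} (haj : a < j) (hjc : j < c) (hck : c < k) :
    orient (f a) (f c) (f j) < 0 := by
  rw [orient_swap_right, neg_lt_zero]
  exact hf a j c haj hjc hck

lemma orient_pos_of_not_between {a c j : ℕ} (hac : a < c) (hck : c < k) (hjk : j < k)
    (hj : j < a ∨ c < j) : 0 < orient (f a) (f c) (f j) := by
  rcases hj with hj | hj
  · rw [← orient_rotate]
    exact hf j a c hj hac hck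
  · exact hf a c j hac hj hjk

lemma injOn_of_orient_pos (hk : 3 ≤ k) : InjOn f (Set.Iio k) := by
  suffices ∀ i j, i < j → j < k → f i ≠ f j by
    intro i hi j hj hij
    by_contra hne
    rcases Nat.lt_or_gt_of_ne hne with h | h
    · exact this i j h hj hij
    · exact this j i h hi hij.symm
  intro i j hij hjk he
  by_cases hi : 0 < i
  · simpa [he] using hf 0 i j hi hij hjk
  obtain rfl : i = 0 := by omega
  by_cases hj : j + 1 < k
  · simpa [he] using hf 0 j (j + 1) hij (by omega) hj
  · simpa [he] using hf 0 1 j (by omega) (by omega) hjk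

lemma notMem_convexHull_of_not_between {a b c : ℕ} (hac : a < c) (hck : c < k) (hbk : b < k)
    (hb : b < a ∨ c < b) {s : Set Pt} (hs : ∀ r ∈ s, ∃ j, a ≤ j ∧ j ≤ c ∧ f j = r) :
    f b ∉ convexHull ℝ s := by
  refine notMem_convexHull_of_orient_neg (a := f c) (c := f a) (fun r hr => ?_) ?_
  · obtain ⟨j, haj, hjc, rfl⟩ := hs r hr
    rw [orient_swap, neg_nonneg]
    rcases haj.eq_or_lt with rfl | haj
    · simp
    rcases hjc.eq_or_lt with rfl | hjc
    · simp
    exact (orient_neg_of_between hf haj hjc hck).le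
  · rw [orient_swap, neg_lt_zero]
    exact orient_pos_of_not_between hf hac hck hbk hb

lemma notMem_convexHull_of_between {a b c : ℕ} (hab : a < b) (hbc : b < c) (hck : c < k)
    {s : Set Pt} (hs : ∀ r ∈ s, ∃ j < k, (j ≤ a ∨ c ≤ j) ∧ f j = r) :
    f b ∉ convexHull ℝ s := by
  refine notMem_convexHull_of_orient_neg (a := f a) (c := f c) (fun r hr => ?_)
    (orient_neg_of_between hf hab hbc hck)
  obtain ⟨j, hjk, hj | hj, rfl⟩ := hs r hr
  · rcases hj.eq_or_lt with rfl | hj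
    · simp
    exact (orient_pos_of_not_between hf (hab.trans hbc) hck hjk (Or.inl hj)).le
  · rcases hj.eq_or_lt with rfl | hj
    · simp
    exact (orient_pos_of_not_between hf (hab.trans hbc) hck hjk (Or.inr hj)).le

lemma convexPos_of_orient_pos (hk : 3 ≤ k) [DecidableEq Pt] :
    ConvexPos ↑((Finset.range k).image f) := by
  rintro _ hp
  obtain ⟨b, hb, rfl⟩ : ∃ b < k, f b = _ := by simpa using hp
  have others : ∀ r ∈ (↑((Finset.range k).image f) : Set Pt) \ {f b},
      ∃ j < k, j ≠ b ∧ f j = r := by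
    rintro r ⟨hr, hrb⟩
    obtain ⟨j, hj, rfl⟩ : ∃ j < k, f j = r := by simpa using hr
    exact ⟨j, hj, fun h => hrb (by rw [h]; rfl), rfl⟩
  -- `f b` is cut off by the line through its two cyclic neighbours
  rcases Nat.eq_zero_or_pos b with rfl | hb0
  · refine notMem_convexHull_of_not_between hf (a := 1) (c := k - 1) (by omega) (by omega) hb
      (by omega) fun r hr => ?_
    obtain ⟨j, hj, hj0, rfl⟩ := others r hr
    exact ⟨j, by omega, by omega, rfl⟩
  rcases (show b ≤ k - 1 by omega).eq_or_lt with rfl | hbk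
  · refine notMem_convexHull_of_not_between hf (a := 0) (c := k - 2) (by omega) (by omega) hb
      (by omega) fun r hr => ?_
    obtain ⟨j, hj, hjb, rfl⟩ := others r hr
    exact ⟨j, by omega, by omega, rfl⟩
  · refine notMem_convexHull_of_between hf (a := b - 1) (c := b + 1) (by omega) (by omega)
      (by omega) fun r hr => ?_
    obtain ⟨j, hj, hjb, rfl⟩ := others r hr
    exact ⟨j, hj, by omega, rfl⟩

lemma hasConvexNGon_of_orient_pos (hk : 3 ≤ k) {P : Set Pt} (hP : ∀ i < k, f i ∈ P) :
    HasConvexNGon k P := by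
  classical
  refine ⟨(Finset.range k).image f, ?_, ?_, convexPos_of_orient_pos hf hk⟩
  · intro r hr
    obtain ⟨i, hi, rfl⟩ : ∃ i < k, f i = r := by simpa using hr
    exact hP i hi
  · rw [Finset.card_image_of_injOn (by simpa using injOn_of_orient_pos hf hk), Finset.card_range]

end OrientedSequence

lemma HasCup.hasConvexNGon {n : ℕ} (hn : 3 ≤ n) {P : Set Pt} (h : HasCup n P) :
    HasConvexNGon n P := by
  obtain ⟨f, hf⟩ := h
  exact hasConvexNGon_of_orient_pos (fun _ _ _ => IsCupSeq.orient_pos hf) hn hf.1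

def MapsConvexHulls (f : Pt → Pt) (A : Set Pt) : Prop :=
  ∀ Q : Finset Pt, ↑Q ⊆ A → ∀ q ∈ convexHull ℝ (↑Q : Set Pt), f q ∈ convexHull ℝ (f '' ↑Q)

lemma AffineMap.mapsConvexHulls (f : Pt →ᵃ[ℝ] Pt) (A : Set Pt) : MapsConvexHulls f A :=
  fun Q _ _ hq => f.image_convexHull (↑Q : Set Pt) ▸ mem_image_of_mem f hq

lemma ConvexPos.of_image {f : Pt → Pt} {A : Set Pt} (hinj : InjOn f A) (hf : MapsConvexHulls f A)
    {Q : Finset Pt} (hQ : ↑Q ⊆ A) (h : ConvexPos (f '' ↑Q)) : ConvexPos ↑Q := by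
  classical
  intro x hx hmem
  rw [← Finset.coe_erase] at hmem
  have himg := hf (Q.erase x) ((Finset.coe_erase x Q ▸ sdiff_subset).trans hQ) x hmem
  rw [Finset.coe_erase, (hinj.mono hQ).image_sdiff_subset (Set.singleton_subset_iff.2 hx),
    image_singleton] at himg
  exact h (f x) (mem_image_of_mem f hx) himg

lemma HasConvexNGon.of_image {n : ℕ} {f : Pt → Pt} {A : Set Pt} (hinj : InjOn f A)
    (hf : MapsConvexHulls f A) (h : HasConvexNGon n (f '' A)) : HasConvexNGon n A := by
  classical
  obtain ⟨T, hTA, hcard, hpos⟩ := h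
  obtain ⟨Q, hQA, rfl⟩ := Finset.subset_set_image_iff.1 hTA
  refine ⟨Q, hQA, ?_, ConvexPos.of_image hinj hf hQA (by rwa [Finset.coe_image] at hpos)⟩
  rwa [Finset.card_image_of_injOn (hinj.mono hQA)] at hcard

lemma HasConvexNGon.mono {n : ℕ} {S T : Set Pt} (h : HasConvexNGon n S) (hST : S ⊆ T) :
    HasConvexNGon n T :=
  let ⟨U, hUS, hU⟩ := h
  ⟨U, hUS.trans hST, hU⟩

def shearAt (t : ℝ) (a : Pt) : Pt →ᵃ[ℝ] Pt where
  toFun w := (w.1 - a.1 + t * (w.2 - a.2), w.2 - a.2)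
  linear := (LinearMap.fst ℝ ℝ ℝ + t • LinearMap.snd ℝ ℝ ℝ).prod (LinearMap.snd ℝ ℝ ℝ)
  map_vadd' p v := by ext <;> simp <;> ring

@[simp] lemma shearAt_apply (t : ℝ) (a w : Pt) :
    shearAt t a w = (w.1 - a.1 + t * (w.2 - a.2), w.2 - a.2) := rfl

lemma shearAt_self (t : ℝ) (a : Pt) : shearAt t a a = 0 := by
  ext <;> simp

lemma shearAt_injective (t : ℝ) (a : Pt) : Function.Injective (shearAt t a) := by
  intro v w h
  simp only [shearAt_apply, Prod.mk.injEq] at h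
  exact Prod.ext (by linear_combination h.1 - t * h.2) (by linarith [h.2])

lemma orient_shearAt (t : ℝ) (a u v w : Pt) :
    orient (shearAt t a u) (shearAt t a v) (shearAt t a w) = orient u v w := by
  simp only [orient, shearAt_apply]
  ring

lemma exists_injOn_fst_add_mul_snd (S : Finset Pt) :
    ∃ t : ℝ, InjOn (fun w : Pt => w.1 + t * w.2) ↑S := by
  classical
  obtain ⟨t, ht⟩ := Infinite.exists_notMem_finset
    ((S ×ˢ S).image fun pq : Pt × Pt => (pq.2.1 - pq.1.1) / (pq.1.2 - pq.2.2))
  refine ⟨t, fun p hp q hq hpq => ?_⟩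
  simp only at hpq
  by_cases h2 : p.2 = q.2
  · exact Prod.ext (by rw [h2] at hpq; linarith) h2
  · refine absurd (Finset.mem_image.2 ⟨(p, q), Finset.mem_product.2 ⟨hp, hq⟩, ?_⟩) ht
    rw [div_eq_iff (sub_ne_zero.2 h2)]
    linear_combination -hpq

lemma exists_insert_origin_of_genPos {n : ℕ} {S : Finset Pt} (hS : S.Nonempty)
    (hgp : GenPos ↑S) (hno : ¬HasConvexNGon n ↑S) :
    ∃ A : Finset Pt, A.card + 1 = S.card ∧ ↑A ⊆ {q : Pt | 0 < q.1} ∧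
      GenPos (insert 0 ↑A) ∧ ¬HasConvexNGon n (insert 0 ↑A) := by
  classical
  obtain ⟨t, ht⟩ := exists_injOn_fst_add_mul_snd S
  obtain ⟨a, ha, hmin⟩ := S.exists_min_image (fun w : Pt => w.1 + t * w.2) hS
  have hSA : shearAt t a '' ↑S = insert 0 ↑((S.erase a).image (shearAt t a)) := by
    conv_lhs => rw [← Finset.insert_erase ha]
    rw [Finset.coe_insert, image_insert_eq, Finset.coe_image, shearAt_self]
  refine ⟨(S.erase a).image (shearAt t a), ?_, ?_, hSA ▸ ?_, hSA ▸ ?_⟩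
  · rw [Finset.card_image_of_injective _ (shearAt_injective t a), Finset.card_erase_add_one ha]
  · intro r hr
    obtain ⟨s, hs, rfl⟩ := Finset.mem_image.1 hr
    obtain ⟨hsa, hsS⟩ := Finset.mem_erase.1 hs
    have := lt_of_le_of_ne (hmin s hsS) fun h => hsa (ht hsS ha h.symm)
    show 0 < s.1 - a.1 + t * (s.2 - a.2)
    linarith
  · exact hgp.image fun _ _ _ _ _ _ h => by rwa [orient_shearAt]
  · exact fun h => hno (h.of_image (shearAt_injective t a).injOn ((shearAt t a).mapsConvexHulls _))

def persp (q : Pt) : Pt := (q.2 / q.1, -1 / q.1)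

lemma persp_injOn : InjOn persp {q : Pt | 0 < q.1} := by
  rintro a (ha : 0 < a.1) b (hb : 0 < b.1) h
  simp only [persp, Prod.mk.injEq] at h
  have hx : a.1 = b.1 := by
    have := h.2
    rw [div_eq_div_iff ha.ne' hb.ne'] at this
    linarith
  rw [hx] at h
  exact Prod.ext hx ((div_left_inj' hb.ne').1 h.1)

lemma orient_eq_of_persp {a b c : Pt} (ha : a.1 ≠ 0) (hb : b.1 ≠ 0) (hc : c.1 ≠ 0) :
    orient a b c = -(a.1 * b.1 * c.1) * orient (persp a) (persp b) (persp c) := by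
  unfold orient persp
  field_simp
  ring

lemma orient_origin_eq_of_persp {a b : Pt} (ha : a.1 ≠ 0) (hb : b.1 ≠ 0) :
    orient 0 a b = a.1 * b.1 * ((persp b).1 - (persp a).1) := by
  unfold orient persp
  field_simp
  simp

lemma smul_persp {q : Pt} (hq : q.1 ≠ 0) : q.1 • persp q = (q.2, -1) := by
  simp only [persp, Prod.smul_mk, smul_eq_mul, Prod.mk.injEq]
  constructor <;> field_simp

lemma mapsConvexHulls_persp {A : Set Pt} (hA : A ⊆ {q : Pt | 0 < q.1}) :
    MapsConvexHulls persp A := by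
  intro Q hQA q hq
  have hQ := hQA.trans hA
  have hq1 : 0 < q.1 :=
    convexHull_min hQ (convex_halfSpace_gt (LinearMap.fst ℝ ℝ ℝ).isLinear 0) hq
  obtain ⟨w, hw0, hw1, rfl⟩ := Finset.mem_convexHull'.1 hq
  -- reweighting each point `y` by its abscissa `y.1` turns the combination into one of `persp y`
  have hsum : ∑ y ∈ Q, w y * y.1 = (∑ y ∈ Q, w y • y).1 := by
    simp [Prod.fst_sum]
  have hcomb : ∑ y ∈ Q, (w y * y.1) • persp y = ((∑ y ∈ Q, w y • y).2, -1) := by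
    have : ∀ y ∈ Q, (w y * y.1) • persp y = w y • (y.2, -1) := fun y hy => by
      rw [mul_smul, smul_persp (hQ hy).ne']
    rw [Finset.sum_congr rfl this, Prod.ext_iff]
    simp [Prod.snd_sum, Prod.fst_sum, hw1]
  have := Q.centerMass_mem_convexHull (w := fun y => w y * y.1)
    (fun y hy => mul_nonneg (hw0 y hy) (hQ hy).le) (hsum ▸ hq1) (z := persp)
    (fun y hy => Set.mem_image_of_mem persp hy)
  convert this using 1
  simp only [Finset.centerMass, hsum, hcomb]
  simp only [persp, Prod.smul_mk, smul_eq_mul, Prod.mk.injEq]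
  constructor <;> ring

lemma GenPos.image_persp {A : Set Pt} (hA : A ⊆ {q : Pt | 0 < q.1}) (h : GenPos A) :
    GenPos (persp '' A) :=
  h.image fun a ha b hb c hc habc => by
    rw [orient_eq_of_persp (hA ha).ne' (hA hb).ne' (hA hc).ne'] at habc
    exact right_ne_zero_of_mul habc

lemma GenPos.distinctX_image_persp {A : Set Pt} (hA : A ⊆ {q : Pt | 0 < q.1})
    (h : GenPos (insert 0 A)) : DistinctX (persp '' A) := by
  rintro _ ⟨a, ha, rfl⟩ _ ⟨b, hb, rfl⟩ hab hx
  have h0 : ∀ r ∈ A, (0 : Pt) ≠ r := fun r hr h0 => by simpa [← h0] using hA hr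
  refine genPos_iff_orient_ne_zero.1 h 0 (mem_insert _ _) a (mem_insert_of_mem _ ha) b
    (mem_insert_of_mem _ hb) (h0 a ha) (h0 b hb) (ne_of_apply_ne _ hab) ?_
  rw [orient_origin_eq_of_persp (hA ha).ne' (hA hb).ne', hx, sub_self, mul_zero]

lemma HasCap.hasConvexNGon_insert_origin {m : ℕ} (hm : 2 ≤ m) {A : Set Pt}
    (hA : A ⊆ {q : Pt | 0 < q.1}) (h : HasCap m (persp '' A)) :
    HasConvexNGon (m + 1) (insert 0 A) := by
  obtain ⟨f, hf⟩ := h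
  have hpre : ∀ i < m, ∃ a ∈ A, persp a = f i := hf.1
  set q := Function.invFunOn persp A ∘ f
  have hqA : ∀ i < m, q i ∈ A := fun i hi => Function.invFunOn_mem (hpre i hi)
  have hq : ∀ i < m, persp (q i) = f i := fun i hi => Function.invFunOn_eq (hpre i hi)
  have hqx : ∀ i < m, 0 < (q i).1 := fun i hi => hA (hqA i hi)
  -- in the order `0, q 0, …, q (m - 1)` every triple turns counterclockwise
  refine hasConvexNGon_of_orient_pos (f := fun | 0 => 0 | i + 1 => q i) ?_ (by omega) ?_
  · intro a b c hab hbc hc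
    obtain ⟨b, rfl⟩ : ∃ b', b = b' + 1 := ⟨b - 1, by omega⟩
    obtain ⟨c, rfl⟩ : ∃ c', c = c' + 1 := ⟨c - 1, by omega⟩
    rcases a with _ | a
    · show 0 < orient 0 (q b) (q c)
      rw [orient_origin_eq_of_persp (hqx b (by omega)).ne' (hqx c (by omega)).ne',
        hq b (by omega), hq c (by omega)]
      exact mul_pos (mul_pos (hqx b (by omega)) (hqx c (by omega)))
        (sub_pos.2 (hf.2.1 b c (by omega) (by omega)))
    · show 0 < orient (q a) (q b) (q c)
      rw [orient_eq_of_persp (hqx a (by omega)).ne' (hqx b (by omega)).ne' (hqx c (by omega)).ne',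
        hq a (by omega), hq b (by omega), hq c (by omega)]
      have := mul_pos (mul_pos (hqx a (by omega)) (hqx b (by omega))) (hqx c (by omega))
      exact mul_pos_of_neg_of_neg (neg_neg_of_pos this)
        (IsCapSeq.orient_neg hf (by omega) (by omega) (by omega))
  · rintro (_ | i) hi
    · exact mem_insert _ _
    · exact mem_insert_of_mem _ (hqA i (by omega))

lemma exists_free_of_insert_origin {n : ℕ} (hn : 3 ≤ n) {A : Finset Pt}
    (hA : ↑A ⊆ {q : Pt | 0 < q.1}) (hgp : GenPos (insert 0 ↑A))
    (hno : ¬HasConvexNGon n (insert 0 ↑A)) :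
    ∃ T : Finset Pt, T.card = A.card ∧ GenPos ↑T ∧ DistinctX ↑T ∧ ¬HasCup n ↑T ∧
      ¬HasCap (n - 1) ↑T ∧ ¬HasConvexNGon n ↑T := by
  classical
  have hnoT : ¬HasConvexNGon n (persp '' ↑A) := fun h =>
    hno ((h.of_image (persp_injOn.mono hA) (mapsConvexHulls_persp hA)).mono (subset_insert _ _))
  refine ⟨A.image persp, Finset.card_image_of_injOn (persp_injOn.mono hA), ?_⟩
  rw [Finset.coe_image]
  refine ⟨(hgp.mono (subset_insert _ _)).image_persp hA, hgp.distinctX_image_persp hA,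
    fun h => hnoT (h.hasConvexNGon hn), fun h => hno ?_, hnoT⟩
  simpa [Nat.sub_add_cancel (by omega : 1 ≤ n)] using h.hasConvexNGon_insert_origin (by omega) hA

end

/-- Let `n ≥ 4` and let `z(n, n-1)` be the maximum cardinality of a finite
planar point set, in general position with pairwise distinct x-coordinates, containing no
`n`-cup, no `(n-1)`-cap, and no `n` points in convex position.  If `S` is a finite planar
point set in general position containing no `n` points in convex position, then
`|S| ≤ z(n, n-1) + 1`. -/
theorem stmt_8 (n : ℕ) (hn : 4 ≤ n) (z : ℕ)
    (hz : IsGreatest {N : ℕ | ∃ S : Finset Pt, S.card = N ∧ GenPos ↑S ∧ DistinctX ↑S ∧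
      ¬ HasCup n ↑S ∧ ¬ HasCap (n - 1) ↑S ∧ ¬ HasConvexNGon n ↑S} z)
    (S : Finset Pt) (hgp : GenPos ↑S) (hno : ¬ HasConvexNGon n ↑S) :
    S.card ≤ z + 1 := by
  rcases S.eq_empty_or_nonempty with rfl | hS
  · simp
  obtain ⟨A, hcard, hA, hgpA, hnoA⟩ := exists_insert_origin_of_genPos hS hgp hno
  obtain ⟨T, hT, hfree⟩ := exists_free_of_insert_origin (by omega) hA hgpA hnoA
  have := hz.2 ⟨T, hT, hfree⟩
  omega
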